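/- arXiv:1510.07350 — 5 statements merged into one kernel-verified Lean document; each statement's English description precedes it below -/
import Mathlib

section
/- Let p > q ≥ 1 be real numbers and a, b > 0. If a nonnegative real number x satisfies x^p ≤ a + b·x^q, then x^p ≤ 2^{p/(p-q)} · (a + b^{p/(p-q)}). -/
/-- If `x ≥ 0` satisfies `x^p ≤ a + b·x^q` with `p > q ≥ 1`, `a, b > 0`, then
`x^p ≤ 2^{p/(p-q)}·(a + b^{p/(p-q)})`. -/
theorem stmt0 (x a b p q : ℝ) (hx : 0 ≤ x) (ha : 0 < a) (hb : 0 < b)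
    (hq : 1 ≤ q) (hpq : q < p) (h : x ^ p ≤ a + b * x ^ q) :
    x ^ p ≤ 2 ^ (p / (p - q)) * (a + b ^ (p / (p - q))) := by
  have hpq' : 0 < p - q := by linarith
  set r := p / (p - q) with hr
  have hr1 : 1 ≤ r := by
    rw [hr, le_div_iff₀ hpq']; linarith
  have h2r : (2:ℝ) ≤ 2 ^ r := by
    calc (2:ℝ) = 2 ^ (1:ℝ) := (Real.rpow_one 2).symm
    _ ≤ 2 ^ r := Real.rpow_le_rpow_of_exponent_le one_le_two hr1
  have h2rpos : (0:ℝ) < 2 ^ r := Real.rpow_pos_of_pos (by norm_num) r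
  have hbr : 0 < b ^ r := Real.rpow_pos_of_pos hb r
  rcases le_or_gt (b * x ^ q) a with hcase | hcase
  · calc x ^ p ≤ 2 * a := by linarith
    _ ≤ 2 ^ r * a := by nlinarith
    _ ≤ 2 ^ r * (a + b ^ r) := by nlinarith
  · rcases eq_or_lt_of_le hx with hx0 | hx0
    · rw [← hx0, Real.zero_rpow (by linarith : p ≠ 0)]
      positivity
    · have hxq : 0 < x ^ q := Real.rpow_pos_of_pos hx0 q
      have h1 : x ^ (p - q) ≤ 2 * b := by
        have hsplit : x ^ p = x ^ (p - q) * x ^ q := by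
          rw [← Real.rpow_add hx0]; ring_nf
        have h2 : x ^ (p - q) * x ^ q ≤ (2 * b) * x ^ q := by
          rw [← hsplit]; linarith
        exact le_of_mul_le_mul_right h2 hxq
      have h3 : (x ^ (p - q)) ^ r ≤ (2 * b) ^ r :=
        Real.rpow_le_rpow (by positivity) h1 (by linarith)
      have h4 : (x ^ (p - q)) ^ r = x ^ p := by
        rw [← Real.rpow_mul hx]
        congr 1
        rw [hr]; field_simp
      have h5 : ((2:ℝ) * b) ^ r = 2 ^ r * b ^ r :=
        Real.mul_rpow (by norm_num) hb.le
      rw [h4, h5] at h3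
      nlinarith
end

section
/- Let 0 < q₁ ≤ q₂ ≤ ... ≤ q_k < p and c₀, c₁, ..., c_k be positive reals. If a nonnegative real x satisfies x^p ≤ c₀ + c₁·x^{q₁} + ... + c_k·x^{q_k}, then x^p ≤ β·(c₀ + c₁^{p/(p-q₁)} + ... + c_k^{p/(p-q_k)}), where β = ∏_{ν=1}^{k} 2^{p/(p-q_ν)}. -/
private lemma aux_stmt1 (k : ℕ) : ∀ (x p c₀ : ℝ) (q c : Fin k → ℝ),
    0 ≤ x → 0 < c₀ → (∀ i, 0 < c i) → (∀ i, 0 < q i) → Monotone q → (∀ i, q i < p) →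
    x ^ p ≤ c₀ + ∑ i, c i * x ^ (q i) →
    x ^ p ≤ (∏ i, (2 : ℝ) ^ (p / (p - q i))) * (c₀ + ∑ i, (c i) ^ (p / (p - q i))) := by
  induction k with
  | zero =>
    intro x p c₀ q c hx hc₀ hc hq0 hmono hqp h
    simpa using h
  | succ k ih =>
    intro x p c₀ q c hx hc₀ hc hq0 hmono hqp h
    have hp : 0 < p := (hq0 (Fin.last k)).trans (hqp (Fin.last k))
    have hpq : 0 < p - q (Fin.last k) := sub_pos.2 (hqp (Fin.last k))
    have hrL1 : 1 ≤ p / (p - q (Fin.last k)) := (one_le_div hpq).2 (by linarith [hq0 (Fin.last k)])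
    have hrL0 : 0 ≤ p / (p - q (Fin.last k)) := by linarith
    have h2rL : (2:ℝ) ≤ 2 ^ (p / (p - q (Fin.last k))) := by
      calc (2:ℝ) = 2 ^ (1:ℝ) := by rw [Real.rpow_one]
        _ ≤ 2 ^ (p / (p - q (Fin.last k))) :=
          Real.rpow_le_rpow_of_exponent_le one_le_two hrL1
    rw [Fin.sum_univ_castSucc] at h
    rw [Fin.prod_univ_castSucc, Fin.sum_univ_castSucc]
    have hBpos : 0 < ∏ i : Fin k, (2:ℝ) ^ (p / (p - q i.castSucc)) :=
      Finset.prod_pos fun i _ => Real.rpow_pos_of_pos two_pos _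
    have hB1 : 1 ≤ ∏ i : Fin k, (2:ℝ) ^ (p / (p - q i.castSucc)) := by
      have h1 : ∀ i ∈ Finset.univ, (1:ℝ) ≤ (2:ℝ) ^ (p / (p - q (Fin.castSucc i))) := by
        intro i _
        have hpqi : 0 < p - q i.castSucc := sub_pos.2 (hqp _)
        have hr : (0:ℝ) ≤ p / (p - q i.castSucc) := le_of_lt (div_pos hp hpqi)
        calc (1:ℝ) = 2 ^ (0:ℝ) := by rw [Real.rpow_zero]
          _ ≤ _ := Real.rpow_le_rpow_of_exponent_le one_le_two hr
      have := Finset.prod_le_prod (f := fun _ : Fin k => (1:ℝ))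
        (g := fun i : Fin k => (2:ℝ) ^ (p / (p - q i.castSucc)))
        (fun i _ => zero_le_one) h1
      simpa using this
    have hSpos : 0 ≤ ∑ i : Fin k, (c i.castSucc) ^ (p / (p - q i.castSucc)) :=
      Finset.sum_nonneg fun i _ => Real.rpow_nonneg (hc _).le _
    have hcL : 0 < (c (Fin.last k)) ^ (p / (p - q (Fin.last k))) :=
      Real.rpow_pos_of_pos (hc _) _
    have h2pos : (0:ℝ) < 2 ^ (p / (p - q (Fin.last k))) := Real.rpow_pos_of_pos two_pos _
    rcases le_total (c (Fin.last k) * x ^ q (Fin.last k))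
        (c₀ + ∑ i : Fin k, c i.castSucc * x ^ q i.castSucc) with hle | hge
    · -- last term dominated by the rest: use IH with doubled coefficients
      have h' : x ^ p ≤ 2 * c₀ + ∑ i : Fin k, (2 * c i.castSucc) * x ^ q i.castSucc := by
        have heq : ∑ i : Fin k, (2 * c i.castSucc) * x ^ q i.castSucc
            = 2 * ∑ i : Fin k, c i.castSucc * x ^ q i.castSucc := by
          rw [Finset.mul_sum]; apply Finset.sum_congr rfl; intro i _; ring
        rw [heq]; linarith
      have hmono' : Monotone (fun i : Fin k => q i.castSucc) :=
        hmono.comp (fun _ _ hab => Fin.castSucc_le_castSucc_iff.2 hab)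
      have key := ih x p (2 * c₀) (fun i => q i.castSucc) (fun i => 2 * c i.castSucc)
        hx (by linarith)
        (fun i => by show (0:ℝ) < 2 * c i.castSucc; linarith [hc i.castSucc])
        (fun i => hq0 _) hmono' (fun i => hqp _) h'
      have hterm : ∀ i ∈ (Finset.univ : Finset (Fin k)),
          (2 * c i.castSucc) ^ (p / (p - q i.castSucc))
          ≤ 2 ^ (p / (p - q (Fin.last k))) * (c i.castSucc) ^ (p / (p - q i.castSucc)) := by
        intro i _
        have hpqi : 0 < p - q i.castSucc := sub_pos.2 (hqp _)
        have hri : p / (p - q i.castSucc) ≤ p / (p - q (Fin.last k)) := by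
          apply div_le_div_of_nonneg_left hp.le hpq
          have : q i.castSucc ≤ q (Fin.last k) := hmono (Fin.le_last _)
          linarith
        rw [Real.mul_rpow (by norm_num) (hc _).le]
        have h2 : (2:ℝ) ^ (p / (p - q i.castSucc)) ≤ 2 ^ (p / (p - q (Fin.last k))) :=
          Real.rpow_le_rpow_of_exponent_le one_le_two hri
        exact mul_le_mul_of_nonneg_right h2 (Real.rpow_nonneg (hc _).le _)
      have hsum : 2 * c₀ + ∑ i : Fin k, (2 * c i.castSucc) ^ (p / (p - q i.castSucc))
          ≤ 2 ^ (p / (p - q (Fin.last k))) *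
            (c₀ + ∑ i : Fin k, (c i.castSucc) ^ (p / (p - q i.castSucc))) := by
        have h1 := Finset.sum_le_sum hterm
        rw [← Finset.mul_sum] at h1
        have h2 : 2 * c₀ ≤ 2 ^ (p / (p - q (Fin.last k))) * c₀ := by nlinarith
        rw [mul_add]
        linarith
      have step1 : x ^ p ≤ (∏ i : Fin k, (2:ℝ) ^ (p / (p - q i.castSucc))) *
          (2 ^ (p / (p - q (Fin.last k))) *
            (c₀ + ∑ i : Fin k, (c i.castSucc) ^ (p / (p - q i.castSucc)))) :=
        key.trans (mul_le_mul_of_nonneg_left hsum hBpos.le)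
      have step2 : (∏ i : Fin k, (2:ℝ) ^ (p / (p - q i.castSucc))) *
          (2 ^ (p / (p - q (Fin.last k))) *
            (c₀ + ∑ i : Fin k, (c i.castSucc) ^ (p / (p - q i.castSucc))))
          ≤ (∏ i : Fin k, (2:ℝ) ^ (p / (p - q i.castSucc))) * 2 ^ (p / (p - q (Fin.last k))) *
            (c₀ + (∑ i : Fin k, (c i.castSucc) ^ (p / (p - q i.castSucc))
              + (c (Fin.last k)) ^ (p / (p - q (Fin.last k))))) := by
        rw [mul_assoc]
        apply mul_le_mul_of_nonneg_left _ hBpos.le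
        apply mul_le_mul_of_nonneg_left _ h2pos.le
        linarith
      exact step1.trans step2
    · -- last term dominates: absorption
      have hT : x ^ p ≤ (2 * c (Fin.last k)) * x ^ q (Fin.last k) := by linarith
      have hclaim : x ^ p ≤ (2 * c (Fin.last k)) ^ (p / (p - q (Fin.last k))) := by
        by_cases hx0 : x = 0
        · subst hx0
          rw [Real.zero_rpow hp.ne']
          exact Real.rpow_nonneg (by linarith [hc (Fin.last k)]) _
        · have hx' : 0 < x := lt_of_le_of_ne hx (Ne.symm hx0)
          have hxq : 0 < x ^ q (Fin.last k) := Real.rpow_pos_of_pos hx' _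
          have h1 : x ^ (p - q (Fin.last k)) * x ^ q (Fin.last k)
              ≤ (2 * c (Fin.last k)) * x ^ q (Fin.last k) := by
            rw [← Real.rpow_add hx', sub_add_cancel]; exact hT
          have h2 : x ^ (p - q (Fin.last k)) ≤ 2 * c (Fin.last k) :=
            le_of_mul_le_mul_right h1 hxq
          calc x ^ p = (x ^ (p - q (Fin.last k))) ^ (p / (p - q (Fin.last k))) := by
                rw [← Real.rpow_mul hx]
                congr 1
                field_simp
            _ ≤ (2 * c (Fin.last k)) ^ (p / (p - q (Fin.last k))) :=
                Real.rpow_le_rpow (Real.rpow_nonneg hx _) h2 hrL0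
      have hsplit : (2 * c (Fin.last k)) ^ (p / (p - q (Fin.last k)))
          = 2 ^ (p / (p - q (Fin.last k))) * (c (Fin.last k)) ^ (p / (p - q (Fin.last k))) :=
        Real.mul_rpow (by norm_num) (hc _).le
      rw [hsplit] at hclaim
      have step2 : 2 ^ (p / (p - q (Fin.last k))) * (c (Fin.last k)) ^ (p / (p - q (Fin.last k)))
          ≤ (∏ i : Fin k, (2:ℝ) ^ (p / (p - q i.castSucc))) * 2 ^ (p / (p - q (Fin.last k))) *
            (c₀ + (∑ i : Fin k, (c i.castSucc) ^ (p / (p - q i.castSucc))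
              + (c (Fin.last k)) ^ (p / (p - q (Fin.last k))))) := by
        have ha : 2 ^ (p / (p - q (Fin.last k))) * (c (Fin.last k)) ^ (p / (p - q (Fin.last k)))
            ≤ 2 ^ (p / (p - q (Fin.last k))) *
              (c₀ + (∑ i : Fin k, (c i.castSucc) ^ (p / (p - q i.castSucc))
                + (c (Fin.last k)) ^ (p / (p - q (Fin.last k))))) := by
          apply mul_le_mul_of_nonneg_left _ h2pos.le
          linarith
        calc 2 ^ (p / (p - q (Fin.last k))) * (c (Fin.last k)) ^ (p / (p - q (Fin.last k)))
            ≤ 2 ^ (p / (p - q (Fin.last k))) *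
              (c₀ + (∑ i : Fin k, (c i.castSucc) ^ (p / (p - q i.castSucc))
                + (c (Fin.last k)) ^ (p / (p - q (Fin.last k))))) := ha
          _ = 1 * (2 ^ (p / (p - q (Fin.last k))) *
              (c₀ + (∑ i : Fin k, (c i.castSucc) ^ (p / (p - q i.castSucc))
                + (c (Fin.last k)) ^ (p / (p - q (Fin.last k)))))) := by ring
          _ ≤ (∏ i : Fin k, (2:ℝ) ^ (p / (p - q i.castSucc))) *
              (2 ^ (p / (p - q (Fin.last k))) *
              (c₀ + (∑ i : Fin k, (c i.castSucc) ^ (p / (p - q i.castSucc))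
                + (c (Fin.last k)) ^ (p / (p - q (Fin.last k)))))) := by
              apply mul_le_mul_of_nonneg_right hB1
              apply mul_nonneg h2pos.le
              linarith
          _ = _ := by ring
      exact hclaim.trans step2

/-- If `x ≥ 0` satisfies `x^p ≤ c₀ + ∑ cᵢ x^{qᵢ}` with `0 < q₁ ≤ ... ≤ q_k < p`
and positive coefficients, then `x^p ≤ β (c₀ + ∑ cᵢ^{p/(p-qᵢ)})` with
`β = ∏ 2^{p/(p-qᵢ)}`. -/
theorem stmt1 (k : ℕ) (x p c₀ : ℝ) (q c : Fin k → ℝ)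
    (hx : 0 ≤ x) (hc₀ : 0 < c₀) (hc : ∀ i, 0 < c i)
    (hq0 : ∀ i, 0 < q i) (hmono : Monotone q) (hqp : ∀ i, q i < p)
    (h : x ^ p ≤ c₀ + ∑ i, c i * x ^ (q i)) :
    x ^ p ≤ (∏ i, (2 : ℝ) ^ (p / (p - q i))) *
      (c₀ + ∑ i, (c i) ^ (p / (p - q i))) := by
  exact aux_stmt1 k x p c₀ q c hx hc₀ hc hq0 hmono hqp h
end

section
/- For any complex numbers a and T with |a| ≥ 2|T| and Re(a) < 0, the principal square roots (chosen with nonnegative imaginary part) satisfy |Im √(a+T) − Im √a| ≤ √|T|. -/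
/-!
If `w ^ 2 = z` then `2 (Im w)² = ‖z‖ - Re z`, so perturbing `z` by `T` moves `(Im w)²` by at most
`‖T‖`. When `Re a ≤ 0` the root of `a` has `(Im w)² ≥ ‖a‖ / 2 ≥ ‖T‖`, and dividing
`|x² - y²| ≤ ‖T‖` by `x + y ≥ y ≥ √‖T‖` gives `|x - y| ≤ √‖T‖`.
-/

lemma abs_sub_le_of_abs_sq_sub_sq_le {x y s : ℝ} (hx : 0 ≤ x) (hs : 0 ≤ s) (hsy : s ≤ y)
    (h : |x ^ 2 - y ^ 2| ≤ s ^ 2) : |x - y| ≤ s := by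
  rw [abs_le] at h ⊢
  constructor <;> nlinarith

namespace Complex

lemma two_mul_im_sq_of_sq_eq {w z : ℂ} (h : w ^ 2 = z) : 2 * w.im ^ 2 = ‖z‖ - z.re := by
  have hnorm : ‖z‖ = w.re ^ 2 + w.im ^ 2 := by
    rw [← h, norm_pow, Complex.sq_norm, normSq_apply]; ring
  have hre : z.re = w.re ^ 2 - w.im ^ 2 := by
    rw [← h, pow_two, mul_re]; ring
  rw [hnorm, hre]; ring

lemma abs_im_sq_sub_im_sq_le {w₁ w₂ z T : ℂ} (h₁ : w₁ ^ 2 = z + T) (h₂ : w₂ ^ 2 = z) :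
    |w₁.im ^ 2 - w₂.im ^ 2| ≤ ‖T‖ := by
  have e₁ := two_mul_im_sq_of_sq_eq h₁
  have e₂ := two_mul_im_sq_of_sq_eq h₂
  have hnorm : |‖z + T‖ - ‖z‖| ≤ ‖T‖ := by simpa using abs_norm_sub_norm_le (z + T) z
  have hre := abs_re_le_norm T
  rw [add_re] at e₁
  rw [abs_le] at hnorm hre ⊢
  constructor <;> linarith [hnorm.1, hnorm.2, hre.1, hre.2]

lemma norm_le_two_mul_im_sq {w z : ℂ} (h : w ^ 2 = z) (hre : z.re ≤ 0) :
    ‖z‖ ≤ 2 * w.im ^ 2 := by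
  linarith [two_mul_im_sq_of_sq_eq h]

end Complex

/-- For complex `a, T` with `|a| ≥ 2|T|` and `Re a < 0`, the square roots
chosen with nonnegative imaginary part satisfy
`|Im √(a+T) − Im √a| ≤ √|T|`. -/
theorem stmt2 (a T w₁ w₂ : ℂ) (haT : 2 * ‖T‖ ≤ ‖a‖)
    (hre : a.re < 0) (h₁ : w₁ ^ 2 = a + T) (h₂ : w₂ ^ 2 = a)
    (him₁ : 0 ≤ w₁.im) (him₂ : 0 ≤ w₂.im) :
    |w₁.im - w₂.im| ≤ Real.sqrt ‖T‖ := by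
  have hT : ‖T‖ ≤ w₂.im ^ 2 := by
    linarith [Complex.norm_le_two_mul_im_sq h₂ hre.le]
  have hsqrt : Real.sqrt ‖T‖ ≤ w₂.im := Real.sqrt_le_iff.mpr ⟨him₂, hT⟩
  refine abs_sub_le_of_abs_sq_sub_sq_le him₁ (Real.sqrt_nonneg _) hsqrt ?_
  rw [Real.sq_sqrt (norm_nonneg T)]
  exact Complex.abs_im_sq_sub_im_sq_le h₁ h₂
end

section
/- For any complex numbers a and T with |a| ≤ 2|T|, the square roots with nonnegative imaginary part satisfy |Im √(a+T) − Im √a| ≤ (√3 + √2)·√|T|. -/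
/-! Both imaginary parts are nonnegative and bounded by the modulus of the root, so their difference
is at most the sum of the moduli `√‖a + T‖ + √‖a‖ ≤ √(3‖T‖) + √(2‖T‖)`. -/

open Real

lemma Complex.im_le_sqrt_norm_of_sq_eq {w z : ℂ} (h : w ^ 2 = z) : w.im ≤ √‖z‖ := by
  rw [← h, norm_pow, sqrt_sq (norm_nonneg w)]
  exact w.im_le_norm

/-- For complex `a, T` with `|a| ≤ 2|T|`, the square roots chosen with
nonnegative imaginary part satisfy `|Im √(a+T) − Im √a| ≤ (√3+√2)√|T|`. -/
theorem stmt3 (a T w₁ w₂ : ℂ) (haT : ‖a‖ ≤ 2 * ‖T‖)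
    (h₁ : w₁ ^ 2 = a + T) (h₂ : w₂ ^ 2 = a)
    (him₁ : 0 ≤ w₁.im) (him₂ : 0 ≤ w₂.im) :
    |w₁.im - w₂.im| ≤ (Real.sqrt 3 + Real.sqrt 2) * Real.sqrt (‖T‖) := by
  have hb₁ : w₁.im ≤ √3 * √‖T‖ := by
    rw [← sqrt_mul (by norm_num)]
    refine (Complex.im_le_sqrt_norm_of_sq_eq h₁).trans (sqrt_le_sqrt ?_)
    linarith [norm_add_le a T]
  have hb₂ : w₂.im ≤ √2 * √‖T‖ := by
    rw [← sqrt_mul (by norm_num)]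
    exact (Complex.im_le_sqrt_norm_of_sq_eq h₂).trans (sqrt_le_sqrt haT)
  rw [add_mul, abs_sub_le_iff]
  constructor <;> linarith
end

section
/- Let A be a Hermitian n×n matrix, fix u ∈ ℝ, and let R(v) = (A − (u+iv)I)^{-1}. Then for every diagonal index j and every s ≥ 1 and v > 0: |R_{jj}(u + iv/s)| ≤ s·|R_{jj}(u + iv)|. -/
/-!
Diagonalising `A = U D U*` gives `R_{jj}(z) = ∑ₖ pₖ / (λₖ - z)` with weights `pₖ = |U_{jk}|² ≥ 0`.
For such a sum `F`, the resolvent identity `F z - F w = (z - w) ∑ₖ pₖ / ((λₖ - z)(λₖ - w))`,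
Cauchy–Schwarz and `Im F z = Im z ∑ₖ pₖ / |λₖ - z|²` give
`Im z Im w |F z - F w|² ≤ |z - w|² Im F z Im F w`. For `z = u + ia`, `w = u + ib`, `0 < a ≤ b`,
and `X = |F z|`, `Y = |F w|`, this says `ab (X - Y)² ≤ (b - a)² XY`, i.e.
`(aX - bY)(bX - aY) ≤ 0`, which forces `aX ≤ bY`. Take `a = v / s`, `b = v`.
-/

open Complex Finset Matrix

lemma ofReal_sub_ne_zero_of_im_ne_zero (x : ℝ) {z : ℂ} (hz : z.im ≠ 0) : (x : ℂ) - z ≠ 0 := by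
  intro h
  exact hz (by simpa using (congrArg Complex.im h).symm)

lemma mul_le_mul_of_sub_sq_mul_le {a b X Y : ℝ} (hab : a ≤ b) (hX : 0 ≤ X) (hY : 0 ≤ Y)
    (h : (X - Y) ^ 2 * (a * b) ≤ (b - a) ^ 2 * (X * Y)) : a * X ≤ b * Y := by
  have hfactor : (a * X - b * Y) * (b * X - a * Y) ≤ 0 := by nlinarith
  by_contra! hlt
  have : a * Y < b * X := by nlinarith [mul_le_mul_of_nonneg_right hab hX]
  nlinarith [mul_pos (sub_pos.2 hlt) (sub_pos.2 this)]

noncomputable def discreteStieltjes {ι : Type*} [Fintype ι] (p d : ι → ℝ) (z : ℂ) : ℂ :=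
  ∑ k, (p k : ℂ) / (d k - z)

section DiscreteStieltjes

variable {ι : Type*} [Fintype ι] {p : ι → ℝ} (d : ι → ℝ)

lemma im_discreteStieltjes (z : ℂ) :
    (discreteStieltjes p d z).im = z.im * ∑ k, p k / normSq (d k - z) := by
  simp only [discreteStieltjes, im_sum, div_im, mul_sum]
  refine sum_congr rfl fun k _ => ?_
  simp only [ofReal_im, sub_re, ofReal_re, zero_mul, zero_div, sub_im, zero_sub, mul_neg]
  ring

lemma discreteStieltjes_sub {z w : ℂ} (hz : z.im ≠ 0) (hw : w.im ≠ 0) :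
    discreteStieltjes p d z - discreteStieltjes p d w =
      (z - w) * ∑ k, (p k : ℂ) / ((d k - z) * (d k - w)) := by
  simp only [discreteStieltjes, ← sum_sub_distrib, mul_sum]
  refine sum_congr rfl fun k _ => ?_
  have hz' := ofReal_sub_ne_zero_of_im_ne_zero (d k) hz
  have hw' := ofReal_sub_ne_zero_of_im_ne_zero (d k) hw
  field_simp
  ring

lemma norm_sum_div_mul_sq_le (hp : 0 ≤ p) (z w : ℂ) :
    ‖∑ k, (p k : ℂ) / ((d k - z) * (d k - w))‖ ^ 2 ≤
      (∑ k, p k / normSq (d k - z)) * ∑ k, p k / normSq (d k - w) := by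
  refine (pow_le_pow_left₀ (norm_nonneg _) (norm_sum_le _ _) 2).trans <|
    sum_sq_le_sum_mul_sum_of_sq_le_mul _ (fun k _ => ?_) (fun k _ => ?_) (fun k _ => le_of_eq ?_)
  · exact div_nonneg (hp k) (normSq_nonneg _)
  · exact div_nonneg (hp k) (normSq_nonneg _)
  · rw [norm_div, norm_mul, norm_real, Real.norm_of_nonneg (hp k), ← Complex.sq_norm,
      ← Complex.sq_norm]
    ring

lemma norm_sub_sq_mul_im_mul_im_le (hp : 0 ≤ p) {z w : ℂ} (hz : 0 < z.im) (hw : 0 < w.im) :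
    ‖discreteStieltjes p d z - discreteStieltjes p d w‖ ^ 2 * (z.im * w.im) ≤
      ‖z - w‖ ^ 2 * ((discreteStieltjes p d z).im * (discreteStieltjes p d w).im) := by
  rw [discreteStieltjes_sub d hz.ne' hw.ne', im_discreteStieltjes, im_discreteStieltjes,
    norm_mul, mul_pow]
  have hCS := norm_sum_div_mul_sq_le d hp z w
  have hzw := mul_pos hz hw
  calc _ = ‖z - w‖ ^ 2 * (z.im * w.im) * ‖∑ k, (p k : ℂ) / ((d k - z) * (d k - w))‖ ^ 2 := by ring
    _ ≤ ‖z - w‖ ^ 2 * (z.im * w.im) *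
        ((∑ k, p k / normSq (d k - z)) * ∑ k, p k / normSq (d k - w)) := by gcongr
    _ = _ := by ring

lemma mul_norm_discreteStieltjes_le (hp : 0 ≤ p) (u : ℝ) {a b : ℝ} (ha : 0 < a) (hab : a ≤ b) :
    a * ‖discreteStieltjes p d (u + a * I)‖ ≤ b * ‖discreteStieltjes p d (u + b * I)‖ := by
  have him (t : ℝ) : ((u : ℂ) + t * I).im = t := by simp
  have hdist : ‖((u : ℂ) + a * I) - (u + b * I)‖ = b - a := by
    rw [show ((u : ℂ) + a * I) - (u + b * I) = ((a - b : ℝ) : ℂ) * I by push_cast; ring,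
      norm_mul, norm_I, mul_one, norm_real, Real.norm_of_nonpos (by linarith)]
    ring
  have key := norm_sub_sq_mul_im_mul_im_le d hp (z := u + a * I) (w := u + b * I)
    (by rwa [him]) (by rw [him]; linarith)
  rw [him, him, hdist] at key
  refine mul_le_mul_of_sub_sq_mul_le hab (norm_nonneg _) (norm_nonneg _)
    (le_trans ?_ (key.trans ?_))
  · refine mul_le_mul_of_nonneg_right ?_ (mul_pos ha (ha.trans_le hab)).le
    rw [← sq_abs]
    exact pow_le_pow_left₀ (abs_nonneg _) (abs_norm_sub_norm_le _ _) 2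
  · refine mul_le_mul_of_nonneg_left ((le_abs_self _).trans ?_) (sq_nonneg _)
    rw [abs_mul]
    exact mul_le_mul (abs_im_le_norm _) (abs_im_le_norm _) (abs_nonneg _) (norm_nonneg _)

end DiscreteStieltjes

namespace Matrix.IsHermitian

variable {n : Type*} [Fintype n] [DecidableEq n] {A : Matrix n n ℂ} (hA : A.IsHermitian)

lemma sub_smul_one_eq_conj_diagonal (w : ℂ) :
    A - w • 1 = Unitary.conjStarAlgAut ℂ _ hA.eigenvectorUnitary
      (diagonal fun k => (hA.eigenvalues k : ℂ) - w) := by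
  rw [show (diagonal fun k => (hA.eigenvalues k : ℂ) - w) =
      diagonal (RCLike.ofReal ∘ hA.eigenvalues) - w • 1 by
    rw [smul_one_eq_diagonal, diagonal_sub]; rfl]
  rw [map_sub, map_smul, map_one, ← hA.spectral_theorem]

lemma inv_sub_smul_one_eq_conj_diagonal {w : ℂ} (hw : w.im ≠ 0) :
    (A - w • 1)⁻¹ = Unitary.conjStarAlgAut ℂ _ hA.eigenvectorUnitary
      (diagonal fun k => ((hA.eigenvalues k : ℂ) - w)⁻¹) := by
  refine inv_eq_right_inv ?_
  rw [hA.sub_smul_one_eq_conj_diagonal, ← map_mul, diagonal_mul_diagonal]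
  simp [mul_inv_cancel₀ (ofReal_sub_ne_zero_of_im_ne_zero _ hw)]

lemma inv_sub_smul_one_apply_self {w : ℂ} (hw : w.im ≠ 0) (j : n) :
    (A - w • 1)⁻¹ j j =
      discreteStieltjes (fun k => normSq (hA.eigenvectorUnitary j k)) hA.eigenvalues w := by
  rw [inv_sub_smul_one_eq_conj_diagonal hA hw, Unitary.conjStarAlgAut_apply, mul_apply,
    discreteStieltjes]
  refine sum_congr rfl fun k _ => ?_
  rw [mul_diagonal, star_apply, RCLike.star_def, mul_right_comm, mul_conj,
    div_eq_mul_inv]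

end Matrix.IsHermitian

/-- For a Hermitian matrix `A`, resolvent `R(w) = (A − wI)⁻¹` at `w = u + iv`,
any `s ≥ 1`, `v > 0`: `|R_{jj}(u + iv/s)| ≤ s·|R_{jj}(u + iv)|`. -/
theorem stmt14 (n : ℕ) (A : Matrix (Fin n) (Fin n) ℂ) (hA : A.IsHermitian)
    (u : ℝ) (j : Fin n) (s v : ℝ) (hs : 1 ≤ s) (hv : 0 < v) :
    ‖((A - ((u : ℂ) + (v / s : ℝ) * Complex.I) • 1)⁻¹) j j‖ ≤
      s * ‖((A - ((u : ℂ) + (v : ℝ) * Complex.I) • 1)⁻¹) j j‖ := by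
  have hs0 : 0 < s := one_pos.trans_le hs
  have hvs : 0 < v / s := div_pos hv hs0
  rw [hA.inv_sub_smul_one_apply_self (by simpa using hvs.ne') j,
    hA.inv_sub_smul_one_apply_self (by simpa using hv.ne') j]
  have hmono := mul_norm_discreteStieltjes_le hA.eigenvalues
    (p := fun k => normSq (hA.eigenvectorUnitary j k)) (fun k => normSq_nonneg _) u hvs
    (div_le_self hv.le hs)
  rw [div_mul_eq_mul_div, div_le_iff₀ hs0, mul_right_comm, mul_assoc] at hmono
  exact le_of_mul_le_mul_left hmono hv
end
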